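/- The relative entropy of IQ coherence is additive on tensor products: C^{A1A2|B1B2}_r(ρ_{A1B1} ⊗ ρ_{A2B2}) = C^{A1|B1}_r(ρ_{A1B1}) + C^{A2|B2}_r(ρ_{A2B2}). -/

import Mathlib

/-!
The eigenvalues of `ρ₁ ⊗ ρ₂` are the products `λᵢ μⱼ`, and
`-xy log(xy) = y (-x log x) + x (-y log y)`, so `S(ρ₁ ⊗ ρ₂) = S(ρ₁) Tr ρ₂ + Tr ρ₁ S(ρ₂)`.
Dephasing preserves the trace and factors over the tensor product,
`Δ_{A₁A₂}(ρ₁ ⊗ ρ₂) = Δ_{A₁}ρ₁ ⊗ Δ_{A₂}ρ₂`, so for states both entropies in `C_r` are additive.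
-/

open scoped BigOperators ComplexOrder Kronecker

/-- Trace norm: `‖P‖_tr = Tr √(Pᴴ P)`. -/
noncomputable def traceNorm {n : Type*} [Fintype n] [DecidableEq n] (P : Matrix n n ℂ) : ℝ :=
  (((Matrix.posSemidef_conjTranspose_mul_self P).1.eigenvectorUnitary.1 *
      Matrix.diagonal (((↑) : ℝ → ℂ) ∘ (Real.sqrt ·) ∘ (Matrix.posSemidef_conjTranspose_mul_self P).1.eigenvalues) *
      (star (Matrix.posSemidef_conjTranspose_mul_self P).1.eigenvectorUnitary : Matrix n n ℂ)).trace).re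

/-- Von Neumann entropy S(ρ) = −Tr ρ log ρ, via the eigenvalues of a Hermitian matrix
(junk value 0 for non-Hermitian input). -/
noncomputable def vN {n : Type*} [Fintype n] [DecidableEq n] (ρ : Matrix n n ℂ) : ℝ :=
  if h : ρ.IsHermitian then -∑ i, h.eigenvalues i * Real.log (h.eigenvalues i) else 0

/-- Dephasing channel Δ_A on the A-factor of H_A ⊗ H_B (in the fixed basis of A). -/
def dephA {A B : Type*} [DecidableEq A] (ρ : Matrix (A × B) (A × B) ℂ) :
    Matrix (A × B) (A × B) ℂ :=
  fun p q => if p.1 = q.1 then ρ p q else 0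

/-- Relative entropy of IQ coherence, C^{A|B}_r(ρ) = S(Δ_A(ρ)) − S(ρ). -/
noncomputable def CrIQ {A B : Type*} [Fintype A] [Fintype B] [DecidableEq A] [DecidableEq B]
    (ρ : Matrix (A × B) (A × B) ℂ) : ℝ :=
  vN (dephA ρ) - vN ρ
/-- Tensor product of bipartite operators, with the A-systems and B-systems grouped. -/
def tensBip {A₁ B₁ A₂ B₂ : Type*} (ρ₁ : Matrix (A₁ × B₁) (A₁ × B₁) ℂ)
    (ρ₂ : Matrix (A₂ × B₂) (A₂ × B₂) ℂ) :
    Matrix ((A₁ × A₂) × (B₁ × B₂)) ((A₁ × A₂) × (B₁ × B₂)) ℂ :=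
  fun p q => ρ₁ (p.1.1, p.2.1) (q.1.1, q.2.1) * ρ₂ (p.1.2, p.2.2) (q.1.2, q.2.2)

open Matrix Polynomial Real

namespace Matrix

theorem IsHermitian.kronecker {m n R : Type*} [CommSemiring R] [StarRing R]
    {A : Matrix m m R} {B : Matrix n n R} (hA : A.IsHermitian) (hB : B.IsHermitian) :
    (A ⊗ₖ B).IsHermitian := by
  rw [IsHermitian, conjTranspose_kronecker, hA.eq, hB.eq]

variable {m n : Type*} [Fintype m] [Fintype n] [DecidableEq m] [DecidableEq n]

theorem charpoly_mul_mul_star_of_mem_unitary {R : Type*} [CommRing R] [StarRing R]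
    {U : Matrix n n R} (hU : U ∈ unitary (Matrix n n R)) (D : Matrix n n R) :
    (U * D * star U).charpoly = D.charpoly := by
  rw [charpoly_mul_comm, ← mul_assoc, Unitary.star_mul_self_of_mem hU, one_mul]

theorem IsHermitian.charpoly_kronecker {𝕜 : Type*} [RCLike 𝕜]
    {A : Matrix m m 𝕜} {B : Matrix n n 𝕜} (hA : A.IsHermitian) (hB : B.IsHermitian) :
    (A ⊗ₖ B).charpoly =
      ∏ p : m × n, (X - C ((hA.eigenvalues p.1 * hB.eigenvalues p.2 : ℝ) : 𝕜)) := by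
  have hU := kronecker_mem_unitary hA.eigenvectorUnitary.2 hB.eigenvectorUnitary.2
  conv_lhs => rw [hA.spectral_theorem, hB.spectral_theorem, Unitary.conjStarAlgAut_apply,
    Unitary.conjStarAlgAut_apply, mul_kronecker_mul, mul_kronecker_mul, star_eq_conjTranspose,
    star_eq_conjTranspose, ← conjTranspose_kronecker, ← star_eq_conjTranspose,
    charpoly_mul_mul_star_of_mem_unitary hU, diagonal_kronecker_diagonal, charpoly_diagonal]
  simp

theorem IsHermitian.eigenvalues_map_eq_of_charpoly_eq_prod {𝕜 ι : Type*} [RCLike 𝕜] [Fintype ι]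
    {A : Matrix n n 𝕜} (hA : A.IsHermitian) (d : ι → ℝ)
    (h : A.charpoly = ∏ i, (X - C ((d i : ℝ) : 𝕜))) :
    Finset.univ.val.map hA.eigenvalues = Finset.univ.val.map d := by
  have hroots := hA.roots_charpoly_eq_eigenvalues
  rw [h, Finset.prod_eq_multiset_prod,
    show (fun i => X - C ((d i : ℝ) : 𝕜)) = (fun a => X - C a) ∘ (RCLike.ofReal ∘ d) from rfl,
    ← Multiset.map_map, roots_multiset_prod_X_sub_C, ← Multiset.map_map,
    ← Multiset.map_map] at hroots
  exact (Multiset.map_injective RCLike.ofReal_injective hroots).symm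

end Matrix

section vN

variable {m n : Type*} [Fintype m] [Fintype n] [DecidableEq m] [DecidableEq n]

theorem vN_eq_sum_negMulLog {M : Matrix n n ℂ} (hM : M.IsHermitian) :
    vN M = ∑ i, negMulLog (hM.eigenvalues i) := by
  simp [vN, hM, negMulLog]

theorem vN_eq_of_charpoly_eq_prod {ι : Type*} [Fintype ι] {M : Matrix n n ℂ}
    (hM : M.IsHermitian) (d : ι → ℝ) (h : M.charpoly = ∏ i, (X - C ((d i : ℝ) : ℂ))) :
    vN M = ∑ i, negMulLog (d i) := by
  have := congrArg (fun s => (s.map negMulLog).sum)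
    (hM.eigenvalues_map_eq_of_charpoly_eq_prod d h)
  simp only [Multiset.map_map] at this
  rw [vN_eq_sum_negMulLog hM, Finset.sum_eq_multiset_sum, Finset.sum_eq_multiset_sum]
  exact this

theorem vN_reindex (e : m ≃ n) (M : Matrix m m ℂ) : vN (reindex e e M) = vN M := by
  by_cases hM : M.IsHermitian
  · have hMe : (reindex e e M).IsHermitian := hM.submatrix e.symm
    rw [vN_eq_of_charpoly_eq_prod hMe hM.eigenvalues
      (by rw [charpoly_reindex, hM.charpoly_eq]; rfl), vN_eq_sum_negMulLog hM]
  · have hMe : ¬(reindex e e M).IsHermitian := by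
      rwa [reindex_apply, isHermitian_submatrix_equiv]
    simp only [vN, dif_neg hM, dif_neg hMe]

theorem vN_kronecker {A : Matrix m m ℂ} {B : Matrix n n ℂ} (hA : A.IsHermitian)
    (hB : B.IsHermitian) : vN (A ⊗ₖ B) = vN A * B.trace.re + A.trace.re * vN B := by
  have hchar : (A ⊗ₖ B).charpoly =
      ∏ p : m × n, (X - C ((hA.eigenvalues p.1 * hB.eigenvalues p.2 : ℝ) : ℂ)) :=
    hA.charpoly_kronecker hB
  rw [vN_eq_of_charpoly_eq_prod (hA.kronecker hB) _ hchar, vN_eq_sum_negMulLog hA,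
    vN_eq_sum_negMulLog hB, hA.trace_eq_sum_eigenvalues, hB.trace_eq_sum_eigenvalues,
    Fintype.sum_prod_type]
  simp only [negMulLog_mul, Finset.sum_add_distrib, ← Finset.mul_sum, ← Finset.sum_mul,
    Complex.re_sum, Complex.coe_algebraMap, Complex.ofReal_re]
  ring

end vN

section dephA

variable {A B : Type*} [DecidableEq A]

theorem Matrix.IsHermitian.dephA {ρ : Matrix (A × B) (A × B) ℂ} (h : ρ.IsHermitian) :
    (dephA ρ).IsHermitian := by
  ext p q
  by_cases hpq : p.1 = q.1
  · simp only [conjTranspose_apply, _root_.dephA, if_pos hpq, if_pos hpq.symm, h.apply]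
  · simp only [conjTranspose_apply, _root_.dephA, if_neg hpq, if_neg (Ne.symm hpq), star_zero]

theorem trace_dephA [Fintype A] [Fintype B] (ρ : Matrix (A × B) (A × B) ℂ) :
    (dephA ρ).trace = ρ.trace := by
  simp [Matrix.trace, dephA]

end dephA

section tensBip

variable {A₁ B₁ A₂ B₂ : Type*}

theorem tensBip_eq_reindex_kronecker (ρ₁ : Matrix (A₁ × B₁) (A₁ × B₁) ℂ)
    (ρ₂ : Matrix (A₂ × B₂) (A₂ × B₂) ℂ) :
    tensBip ρ₁ ρ₂ = reindex (Equiv.prodProdProdComm _ _ _ _) (Equiv.prodProdProdComm _ _ _ _)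
      (ρ₁ ⊗ₖ ρ₂) :=
  rfl

theorem dephA_tensBip [DecidableEq A₁] [DecidableEq A₂] (ρ₁ : Matrix (A₁ × B₁) (A₁ × B₁) ℂ)
    (ρ₂ : Matrix (A₂ × B₂) (A₂ × B₂) ℂ) :
    dephA (tensBip ρ₁ ρ₂) = tensBip (dephA ρ₁) (dephA ρ₂) := by
  ext p q
  by_cases h₁ : p.1.1 = q.1.1 <;> by_cases h₂ : p.1.2 = q.1.2 <;>
    simp [dephA, tensBip, Prod.ext_iff, h₁, h₂]

theorem vN_tensBip [Fintype A₁] [Fintype B₁] [Fintype A₂] [Fintype B₂]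
    [DecidableEq A₁] [DecidableEq B₁] [DecidableEq A₂] [DecidableEq B₂]
    {ρ₁ : Matrix (A₁ × B₁) (A₁ × B₁) ℂ} {ρ₂ : Matrix (A₂ × B₂) (A₂ × B₂) ℂ}
    (h₁ : ρ₁.IsHermitian) (h₂ : ρ₂.IsHermitian) :
    vN (tensBip ρ₁ ρ₂) = vN ρ₁ * ρ₂.trace.re + ρ₁.trace.re * vN ρ₂ := by
  rw [tensBip_eq_reindex_kronecker, vN_reindex, vN_kronecker h₁ h₂]

end tensBip

/-- additivity of the relative entropy of IQ coherence:
C^{A₁A₂|B₁B₂}_r(ρ₁ ⊗ ρ₂) = C^{A₁|B₁}_r(ρ₁) + C^{A₂|B₂}_r(ρ₂). -/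
theorem CrIQ_additive {A₁ B₁ A₂ B₂ : Type*} [Fintype A₁] [Fintype B₁] [Fintype A₂] [Fintype B₂]
    [DecidableEq A₁] [DecidableEq B₁] [DecidableEq A₂] [DecidableEq B₂]
    (ρ₁ : Matrix (A₁ × B₁) (A₁ × B₁) ℂ) (ρ₂ : Matrix (A₂ × B₂) (A₂ × B₂) ℂ)
    (hρ₁ : ρ₁.PosSemidef) (hTr₁ : ρ₁.trace = 1)
    (hρ₂ : ρ₂.PosSemidef) (hTr₂ : ρ₂.trace = 1) :
    CrIQ (tensBip ρ₁ ρ₂) = CrIQ ρ₁ + CrIQ ρ₂ := by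
  rw [CrIQ, CrIQ, CrIQ, dephA_tensBip, vN_tensBip hρ₁.1.dephA hρ₂.1.dephA,
    vN_tensBip hρ₁.1 hρ₂.1, trace_dephA, trace_dephA, hTr₁, hTr₂, Complex.one_re]
  ring
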